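/- Let A ∈ ℝ^{m×m} be symmetric positive definite, ΔA ∈ ℝ^{m×m} symmetric, and B ∈ ℝ^{m×m} such that A + ΔA = BBᵀ and |ΔA| ≤ δ·|B||Bᵀ| entrywise for some constant δ > 0 with mδ < 1. Then ‖ΔA‖₂ ≤ (mδ/(1 − mδ))·‖A‖₂. -/
import Mathlib


open Matrix

/-- Spectral norm (ℓ² operator norm) of a real square matrix. -/
noncomputable def specNorm {m : Type*} [Fintype m] [DecidableEq m] (M : Matrix m m ℝ) : ℝ :=
  ‖LinearMap.toContinuousLinearMap (Matrix.toEuclideanLin M)‖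

/-- Frobenius norm of a real square matrix. -/
noncomputable def frobNorm {m : Type*} [Fintype m] (M : Matrix m m ℝ) : ℝ :=
  Real.sqrt (∑ i, ∑ j, (M i j) ^ 2)

/-- Spectral condition number κ₂(M) = ‖M⁻¹‖₂ ‖M‖₂. -/
noncomputable def cond2 {m : Type*} [Fintype m] [DecidableEq m] (M : Matrix m m ℝ) : ℝ :=
  specNorm M⁻¹ * specNorm M

/-- Spectral radius of a real square matrix (via its complex spectrum). -/
noncomputable def specRad {m : Type*} [Fintype m] [DecidableEq m] (M : Matrix m m ℝ) : ℝ :=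
  (spectralRadius ℂ (M.map (Complex.ofReal ·))).toReal

/-- Lower triangular predicate. -/
def LowerTri {k : ℕ} (M : Matrix (Fin k) (Fin k) ℝ) : Prop := ∀ i j, i < j → M i j = 0
/-- Upper triangular predicate. -/
def UpperTri {k : ℕ} (M : Matrix (Fin k) (Fin k) ℝ) : Prop := ∀ i j, j < i → M i j = 0
/-- Positive diagonal entries predicate. -/
def PosDiag {k : ℕ} (M : Matrix (Fin k) (Fin k) ℝ) : Prop := ∀ i, 0 < M i i

/-- The standard symplectic matrix J = [[0, I], [-I, 0]]. -/
noncomputable def Jmat (n : ℕ) : Matrix (Fin n ⊕ Fin n) (Fin n ⊕ Fin n) ℝ :=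
  fromBlocks 0 1 (-1) 0

/-- M is symplectic iff MᵀJM = J. -/
def IsSymplectic {n : ℕ} (M : Matrix (Fin n ⊕ Fin n) (Fin n ⊕ Fin n) ℝ) : Prop :=
  Mᵀ * Jmat n * M = Jmat n

/-- Ω(M) = MᵀJM − J, the loss of symplecticity. -/
noncomputable def Omega {n : ℕ} (M : Matrix (Fin n ⊕ Fin n) (Fin n ⊕ Fin n) ℝ) :
    Matrix (Fin n ⊕ Fin n) (Fin n ⊕ Fin n) ℝ :=
  Mᵀ * Jmat n * M - Jmat n


section AuxStmt19
open scoped Matrix.Norms.L2Operator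

lemma specNorm_eq_l2norm {m : Type*} [Fintype m] [DecidableEq m] (M : Matrix m m ℝ) :
    specNorm M = ‖M‖ := rfl

lemma abs_entry_le_specNorm {m : Type*} [Fintype m] [DecidableEq m] (M : Matrix m m ℝ) (i j : m) :
    |M i j| ≤ specNorm M := by
  have h := M.l2_opNorm_mulVec (EuclideanSpace.single j (1:ℝ))
  rw [EuclideanSpace.norm_single, norm_one, mul_one] at h
  rw [specNorm_eq_l2norm]
  refine le_trans ?_ h
  rw [EuclideanSpace.norm_eq]
  have : |M i j| = Real.sqrt (‖((EuclideanSpace.equiv m ℝ).symm (M *ᵥ EuclideanSpace.single j (1:ℝ))) i‖ ^ 2) := by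
    simp [Matrix.mulVec, dotProduct, EuclideanSpace.single_apply, mul_ite, Real.sqrt_sq_eq_abs]
  rw [this]
  apply Real.sqrt_le_sqrt
  exact Finset.single_le_sum (f := fun k => ‖((EuclideanSpace.equiv m ℝ).symm (M *ᵥ EuclideanSpace.single j (1:ℝ))) k‖^2) (fun k _ => sq_nonneg _) (Finset.mem_univ i)

lemma specNorm_nonneg {m : Type*} [Fintype m] [DecidableEq m] (M : Matrix m m ℝ) :
    0 ≤ specNorm M := by rw [specNorm_eq_l2norm]; exact norm_nonneg _

lemma specNorm_add_le {m : Type*} [Fintype m] [DecidableEq m] (M N : Matrix m m ℝ) :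
    specNorm (M + N) ≤ specNorm M + specNorm N := by
  simp only [specNorm_eq_l2norm]; exact norm_add_le _ _


lemma specNorm_le_of_abs_le {k : ℕ} (M : Matrix (Fin k) (Fin k) ℝ) (d : Fin k → ℝ)
    (hd : ∀ i, 0 ≤ d i) (h : ∀ i j, |M i j| ≤ d i * d j) :
    specNorm M ≤ ∑ i, d i ^ 2 := by
  have hC : (0:ℝ) ≤ ∑ i, d i ^ 2 := Finset.sum_nonneg fun i _ => sq_nonneg _
  refine ContinuousLinearMap.opNorm_le_bound _ hC ?_
  intro x
  have happ : (LinearMap.toContinuousLinearMap (Matrix.toEuclideanLin M)) x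
      = Matrix.toEuclideanLin M x := rfl
  rw [happ]
  set S : ℝ := ∑ j, d j * |x j| with hS
  have hS0 : 0 ≤ S := Finset.sum_nonneg fun j _ => mul_nonneg (hd j) (abs_nonneg _)
  have hx : ∀ j : Fin k, |x j| ^ 2 = ‖x j‖ ^ 2 := by intro j; rw [Real.norm_eq_abs]
  have hnormx : ‖x‖ = Real.sqrt (∑ j, |x j| ^ 2) := by
    rw [EuclideanSpace.norm_eq]; simp only [Real.norm_eq_abs]
  have hS2 : S ^ 2 ≤ (∑ i, d i ^ 2) * (∑ j, |x j| ^ 2) := by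
    have := Finset.sum_mul_sq_le_sq_mul_sq Finset.univ d (fun j => |x j|)
    simpa using this
  have hyi : ∀ i : Fin k, |∑ j, M i j * x j| ≤ d i * S := by
    intro i
    calc |∑ j, M i j * x j| ≤ ∑ j, |M i j * x j| := Finset.abs_sum_le_sum_abs _ _
      _ ≤ ∑ j, (d i * d j) * |x j| := by
          refine Finset.sum_le_sum fun j _ => ?_
          rw [abs_mul]
          exact mul_le_mul_of_nonneg_right (h i j) (abs_nonneg _)
      _ = d i * S := by rw [hS, Finset.mul_sum]; exact Finset.sum_congr rfl fun j _ => by ring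
  have hnormy : ‖Matrix.toEuclideanLin M x‖ = Real.sqrt (∑ i, |∑ j, M i j * x j| ^ 2) := by
    rw [EuclideanSpace.norm_eq]
    simp only [Real.norm_eq_abs]
    congr 1
  rw [hnormy, hnormx]
  have key : ∑ i, |∑ j, M i j * x j| ^ 2 ≤ (∑ i, d i ^ 2) ^ 2 * (∑ j, |x j| ^ 2) := by
    calc ∑ i, |∑ j, M i j * x j| ^ 2 ≤ ∑ i, (d i * S) ^ 2 := by
          refine Finset.sum_le_sum fun i _ => ?_
          exact pow_le_pow_left₀ (abs_nonneg _) (hyi i) 2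
      _ = (∑ i, d i ^ 2) * S ^ 2 := by simp_rw [mul_pow]; rw [← Finset.sum_mul]
      _ ≤ (∑ i, d i ^ 2) * ((∑ i, d i ^ 2) * (∑ j, |x j| ^ 2)) :=
          mul_le_mul_of_nonneg_left hS2 hC
      _ = (∑ i, d i ^ 2) ^ 2 * (∑ j, |x j| ^ 2) := by ring
  calc Real.sqrt (∑ i, |∑ j, M i j * x j| ^ 2)
      ≤ Real.sqrt ((∑ i, d i ^ 2) ^ 2 * (∑ j, |x j| ^ 2)) := Real.sqrt_le_sqrt key
    _ = (∑ i, d i ^ 2) * Real.sqrt (∑ j, |x j| ^ 2) := by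
        rw [Real.sqrt_mul (sq_nonneg _), Real.sqrt_sq hC]

end AuxStmt19

/-- If A is symmetric positive definite, ΔA symmetric, A + ΔA = BBᵀ and
|ΔA| ≤ δ|B||Bᵀ| entrywise with 0 < δ and mδ < 1, then ‖ΔA‖₂ ≤ (mδ/(1−mδ))‖A‖₂. -/
theorem stmt19 {m : ℕ} (A ΔA B : Matrix (Fin m) (Fin m) ℝ) (δ : ℝ)
    (hA : A.PosDef) (hΔ : ΔA.IsSymm)
    (hfac : A + ΔA = B * Bᵀ)
    (hδ : 0 < δ) (hmδ : (m : ℝ) * δ < 1)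
    (hbound : ∀ i j, |ΔA i j| ≤ δ * ∑ k, |B i k| * |B j k|) :
    specNorm ΔA ≤ (m : ℝ) * δ / (1 - (m : ℝ) * δ) * specNorm A := by
  classical
  set d : Fin m → ℝ := fun i => Real.sqrt (δ * ∑ k, B i k ^ 2) with hd
  have hd0 : ∀ i, 0 ≤ d i := fun i => Real.sqrt_nonneg _
  have hsq : ∀ i, d i ^ 2 = δ * ∑ k, B i k ^ 2 := by
    intro i
    exact Real.sq_sqrt (mul_nonneg hδ.le (Finset.sum_nonneg fun k _ => sq_nonneg _))
  have habs : ∀ i j, |ΔA i j| ≤ d i * d j := by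
    intro i j
    refine le_trans (hbound i j) ?_
    have hcs : (∑ k, |B i k| * |B j k|) ^ 2 ≤ (∑ k, B i k ^ 2) * (∑ k, B j k ^ 2) := by
      have := Finset.sum_mul_sq_le_sq_mul_sq Finset.univ (fun k => |B i k|) (fun k => |B j k|)
      simpa [sq_abs] using this
    have hcs' : ∑ k, |B i k| * |B j k| ≤ Real.sqrt ((∑ k, B i k ^ 2) * (∑ k, B j k ^ 2)) :=
      Real.le_sqrt_of_sq_le hcs
    have hdd : d i * d j = δ * Real.sqrt ((∑ k, B i k ^ 2) * (∑ k, B j k ^ 2)) := by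
      rw [hd]
      rw [← Real.sqrt_mul (mul_nonneg hδ.le (Finset.sum_nonneg fun k _ => sq_nonneg _))]
      rw [show δ * (∑ k, B i k ^ 2) * (δ * ∑ k, B j k ^ 2)
          = δ ^ 2 * ((∑ k, B i k ^ 2) * (∑ k, B j k ^ 2)) by ring]
      rw [Real.sqrt_mul (sq_nonneg _), Real.sqrt_sq hδ.le]
    rw [hdd]
    exact mul_le_mul_of_nonneg_left hcs' hδ.le
  have h1 : specNorm ΔA ≤ ∑ i, d i ^ 2 := specNorm_le_of_abs_le ΔA d hd0 habs
  have hdiag : ∀ i, (B * Bᵀ) i i = ∑ k, B i k ^ 2 := by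
    intro i; simp [Matrix.mul_apply, Matrix.transpose_apply, sq]
  have h2 : (∑ i, d i ^ 2) = δ * ∑ i, (B * Bᵀ) i i := by
    rw [Finset.mul_sum]
    exact Finset.sum_congr rfl fun i _ => by rw [hsq i, hdiag i]
  have h3 : ∀ i, (B * Bᵀ) i i ≤ specNorm (B * Bᵀ) := by
    intro i
    exact le_trans (le_abs_self _) (abs_entry_le_specNorm _ i i)
  have h4 : (∑ i, (B * Bᵀ) i i) ≤ (m : ℝ) * specNorm (B * Bᵀ) := by
    calc ∑ i, (B * Bᵀ) i i ≤ ∑ _i : Fin m, specNorm (B * Bᵀ) :=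
          Finset.sum_le_sum fun i _ => h3 i
      _ = (m : ℝ) * specNorm (B * Bᵀ) := by simp [mul_comm]
  have h5 : specNorm (B * Bᵀ) ≤ specNorm A + specNorm ΔA := by
    rw [← hfac]; exact specNorm_add_le A ΔA
  set t := specNorm ΔA with ht
  set a := specNorm A with ha
  have ha0 : 0 ≤ a := specNorm_nonneg A
  have hmain : t ≤ (m : ℝ) * δ * (a + t) := by
    have h6 : (∑ i, d i ^ 2) ≤ δ * ((m : ℝ) * (a + t)) := by
      rw [h2]
      exact mul_le_mul_of_nonneg_left
        (le_trans h4 (mul_le_mul_of_nonneg_left h5 (Nat.cast_nonneg m))) hδ.le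
    calc t ≤ δ * ((m : ℝ) * (a + t)) := le_trans h1 h6
      _ = (m : ℝ) * δ * (a + t) := by ring
  have hpos : 0 < 1 - (m : ℝ) * δ := by linarith
  rw [div_mul_eq_mul_div, le_div_iff₀ hpos]
  nlinarith [hmain]
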